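/- Fix d, h ∈ ℕ and set |Λ^n| := (2n)^d. Let {S^n}_{n∈ℕ} be a weakly regular and weakly nearly additive ℝ^h-valued process consisting of integrable random variables, and suppose sup_{n∈ℕ} ‖E[S^n]‖/|Λ^n| < ∞. Then the limit Ŝ := lim_{n→∞} E[S^n]/|Λ^n| exists in ℝ^h, and S^n/|Λ^n| → Ŝ in probability as n → ∞. -/

import Mathlib

/-!
Fix `k`. Weak near-additivity replaces `S^{(2m+1)k}` by a sum of `(2m+1)^d` independent copies
of `S^{k-r}`, up to an error which is small in probability uniformly in `m` once `k` is large; by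
the strong law of large numbers (Etemadi's version, along an enumeration of `ℤ^d` in which every
box `ℤ^d ∩ [-m, m]^d` is an initial segment) the normalised sum tends to
`c_k = E[S^{k-r}] / |Λ^k|`. Weak regularity compares `S^n` with `S^{(2m_n+1)k}`, and
`|Λ^{(2m_n+1)k}| / |Λ^n| → 1`. Hence, for large `k`, `S^n / |Λ^n|` is eventually within `ε` of
`c_k` outside a set of small probability. Comparing two such approximations at one `ω` shows that
`(c_k)` is Cauchy; its limit `Ŝ` is the limit in probability of `S^n / |Λ^n|`, and
`E[S^n] / |Λ^n| = (|Λ^{n+r}| / |Λ^n|) c_{n+r} → Ŝ`.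
-/

open MeasureTheory Filter
open scoped ENNReal RealInnerProductSpace

namespace RandomCubical

variable {Ω : Type*} [MeasurableSpace Ω]

/-- `|Λ^n| = (2n)^d`. -/
noncomputable def vol (d n : ℕ) : ℝ := (2 * (n : ℝ)) ^ d

/-- The lattice box `ℤ^d ∩ [-m, m]^d`. -/
noncomputable def box (d m : ℕ) : Finset (Fin d → ℤ) :=
  Fintype.piFinset fun _ => Finset.Icc (-(m : ℤ)) (m : ℤ)

/-- The conditions of weak `r`-near additivity, for a given witness family
`T n z` (`z ∈ ℤ^d`) of independent copies of `S n`: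
`sup_{m} |Λ^{(2m+1)k}|⁻¹ ‖S^{(2m+1)k} - ∑_z S^{k-r,z}‖ → 0` in probability as `k → ∞`. -/
def WeakNAWitness (d h : ℕ) (P : Measure Ω) (S : ℕ → Ω → EuclideanSpace ℝ (Fin h))
    (r : ℕ) (T : ℕ → (Fin d → ℤ) → Ω → EuclideanSpace ℝ (Fin h)) : Prop :=
  (∀ n, 1 ≤ n → ProbabilityTheory.iIndepFun (T n) P) ∧
  (∀ n, 1 ≤ n → ∀ z, ProbabilityTheory.IdentDistrib (T n z) (S n) P P) ∧
  ∀ ε > (0 : ℝ), Tendsto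
    (fun k => P {ω | ∃ m : ℕ, 1 ≤ m ∧ ε * vol d ((2 * m + 1) * k) <
        ‖S ((2 * m + 1) * k) ω - ∑ z ∈ box d m, T (k - r) z ω‖})
    atTop (nhds 0)

/-- Weakly nearly additive process. -/
def WeakNearlyAdditive (d h : ℕ) (P : Measure Ω)
    (S : ℕ → Ω → EuclideanSpace ℝ (Fin h)) : Prop :=
  ∃ r T, WeakNAWitness d h P S r T

/-- Weakly regular process: for each fixed `k`,
`|Λ^n|⁻¹ ‖S^n - S^{(2 m_n + 1)k}‖ → 0` in probability as `n → ∞`, where `m_n` is the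
unique integer with `(2 m_n + 1)k ≤ n < (2 m_n + 3)k`. -/
def WeakRegular (d h : ℕ) (P : Measure Ω)
    (S : ℕ → Ω → EuclideanSpace ℝ (Fin h)) : Prop :=
  ∀ k, 1 ≤ k → ∀ ε > (0 : ℝ), Tendsto
    (fun n => P {ω | ∃ m : ℕ, (2 * m + 1) * k ≤ n ∧ n < (2 * m + 3) * k ∧
        ε * vol d n < ‖S n ω - S ((2 * m + 1) * k) ω‖})
    atTop (nhds 0)

open ProbabilityTheory Finset

lemma vol_pos {d n : ℕ} (hn : 0 < n) : 0 < vol d n := by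
  unfold vol; positivity

lemma vol_mono (d : ℕ) : Monotone (vol d) := fun a b hab => by
  unfold vol; gcongr

lemma vol_mul (d a k : ℕ) : vol d (a * k) = (a : ℝ) ^ d * vol d k := by
  simp only [vol, Nat.cast_mul, ← mul_pow]; ring_nf

lemma vol_div_vol (d a b : ℕ) : vol d a / vol d b = ((a : ℝ) / b) ^ d := by
  rw [vol, vol, ← div_pow, mul_div_mul_left _ _ two_ne_zero]

lemma tendsto_vol_div_vol {d : ℕ} {M : ℕ → ℕ} {C : ℝ}
    (hM : ∀ᶠ n in atTop, |(M n : ℝ) - n| ≤ C) :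
    Tendsto (fun n => vol d (M n) / vol d n) atTop (nhds 1) := by
  have hdev : Tendsto (fun n : ℕ => ((M n : ℝ) - n) / n) atTop (nhds 0) := by
    refine squeeze_zero_norm' ?_ (tendsto_const_div_atTop_nhds_zero_nat C)
    filter_upwards [hM] with n hn
    rw [Real.norm_eq_abs, abs_div, Nat.abs_cast]
    gcongr
  have hratio : Tendsto (fun n : ℕ => (M n : ℝ) / n) atTop (nhds 1) := by
    have h1 : Tendsto (fun n : ℕ => 1 + ((M n : ℝ) - n) / n) atTop (nhds 1) := by
      simpa using hdev.const_add 1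
    refine h1.congr' ?_
    filter_upwards [eventually_ne_atTop 0] with n hn
    field_simp
    ring
  simpa [vol_div_vol] using hratio.pow d

lemma card_box (d m : ℕ) : #(box d m) = (2 * m + 1) ^ d := by
  simp only [box, Fintype.card_piFinset, Int.card_Icc, prod_const, card_univ, Fintype.card_fin]
  congr 1
  omega

lemma box_mono (d : ℕ) : Monotone (box d) := fun a b hab => by
  simp only [box]
  exact Fintype.piFinset_subset _ _ fun _ => Icc_subset_Icc (by omega) (by omega)

lemma lt_card_box {d : ℕ} (hd : 1 ≤ d) (m : ℕ) : m < #(box d m) := by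
  rw [card_box]
  calc m < 2 * m + 1 := by omega
    _ ≤ (2 * m + 1) ^ d := Nat.le_self_pow (by omega) _

section Enumeration

variable {ι : Type*} [DecidableEq ι] (B : ℕ → Finset ι)

noncomputable def chainList : ℕ → List ι
  | 0 => (B 0).toList
  | m + 1 => chainList m ++ (B (m + 1) \ B m).toList

variable {B}

lemma toFinset_chainList (hB : Monotone B) (m : ℕ) : (chainList B m).toFinset = B m := by
  induction m with
  | zero => simp [chainList]
  | succ m ih =>
    rw [chainList, List.toFinset_append, ih, toList_toFinset,
      union_sdiff_of_subset (hB m.le_succ)]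

lemma nodup_chainList (hB : Monotone B) (m : ℕ) : (chainList B m).Nodup := by
  induction m with
  | zero => exact nodup_toList _
  | succ m ih =>
    refine ih.append (nodup_toList _) fun a ha hb => ?_
    rw [← List.mem_toFinset, toFinset_chainList hB] at ha
    exact (mem_sdiff.1 (mem_toList.1 hb)).2 ha

lemma length_chainList (hB : Monotone B) (m : ℕ) : (chainList B m).length = #(B m) := by
  rw [← toFinset_chainList hB, List.card_toFinset, (nodup_chainList hB m).dedup]

lemma chainList_prefix {a b : ℕ} (hab : a ≤ b) : chainList B a <+: chainList B b := by
  induction b, hab using Nat.le_induction with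
  | base => exact List.prefix_refl _
  | succ b _ ih => exact ih.trans (List.prefix_append _ _)

theorem exists_injective_image_range_card (hB : Monotone B) (hcard : ∀ m, m < #(B m)) :
    ∃ e : ℕ → ι, Function.Injective e ∧ ∀ m, (range #(B m)).image e = B m := by
  have hlen : ∀ {m n}, n < #(B m) → n < (chainList B m).length := fun h => by
    rwa [length_chainList hB]
  let e n := (chainList B n)[n]'(hlen (hcard n))
  have he : ∀ {m n} (hn : n < #(B m)), e n = (chainList B m)[n]'(hlen hn) := fun {m n} hn => by
    rcases le_total m n with hmn | hnm
    · exact ((chainList_prefix hmn).getElem (hlen hn)).symm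
    · exact (chainList_prefix hnm).getElem (hlen (hcard n))
  have he_inj : Function.Injective e := fun a b hab => by
    have hmax : ∀ {n}, n ≤ max a b → n < #(B (max a b)) := fun h =>
      h.trans_lt (hcard _)
    rw [he (hmax (le_max_left a b)), he (hmax (le_max_right a b))] at hab
    exact (nodup_chainList hB _).getElem_inj_iff.1 hab
  refine ⟨e, he_inj, fun m => eq_of_subset_of_card_le ?_ ?_⟩
  · simp only [subset_iff, mem_image, mem_range, forall_exists_index, and_imp]
    rintro _ n hn rfl
    rw [he hn, ← toFinset_chainList hB m, List.mem_toFinset]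
    exact List.getElem_mem _
  · rw [card_image_of_injective _ he_inj, card_range]

theorem strong_law_ae_of_monotone_finset {E : Type*} [NormedAddCommGroup E] [NormedSpace ℝ E]
    [CompleteSpace E] [MeasurableSpace E] [BorelSpace E] {μ : Measure Ω}
    (hB : Monotone B) (hcard : ∀ m, m < #(B m)) {X : ι → Ω → E} {Y : Ω → E}
    (hY : Integrable Y μ) (hindep : Pairwise fun i j => IndepFun (X i) (X j) μ)
    (hident : ∀ i, IdentDistrib (X i) Y μ μ) :
    ∀ᵐ ω ∂μ, Tendsto (fun m => (#(B m) : ℝ)⁻¹ • ∑ i ∈ B m, X i ω) atTop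
      (nhds (∫ ω, Y ω ∂μ)) := by
  obtain ⟨e, he, himage⟩ := exists_injective_image_range_card hB hcard
  have hlaw := strong_law_ae (X ∘ e) ((hident (e 0)).integrable_iff.2 hY)
    (fun a b hab => hindep (he.ne hab)) (fun n => (hident _).trans (hident _).symm)
  have hcard_tendsto : Tendsto (fun m => #(B m)) atTop atTop :=
    tendsto_atTop_mono (fun m => (hcard m).le) tendsto_id
  have hsum : ∀ m ω, ∑ n ∈ range #(B m), X (e n) ω = ∑ i ∈ B m, X i ω := fun m ω => by
    conv_rhs => rw [← himage m]
    exact (sum_image (f := fun i => X i ω) fun a _ b _ hab => he hab).symm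
  filter_upwards [hlaw] with ω hω
  rw [← (hident (e 0)).integral_eq]
  exact (hω.comp hcard_tendsto).congr fun m => by simp only [Function.comp_apply, hsum]

end Enumeration

theorem tendstoInMeasure_box_average {E : Type*} [NormedAddCommGroup E] [NormedSpace ℝ E]
    [CompleteSpace E] [MeasurableSpace E] [BorelSpace E] {d : ℕ} (hd : 1 ≤ d)
    {μ : Measure Ω} [IsFiniteMeasure μ] {X : (Fin d → ℤ) → Ω → E} {Y : Ω → E}
    (hY : Integrable Y μ) (hindep : iIndepFun X μ) (hident : ∀ z, IdentDistrib (X z) Y μ μ) :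
    TendstoInMeasure μ (fun m ω => (#(box d m) : ℝ)⁻¹ • ∑ z ∈ box d m, X z ω) atTop
      (fun _ => ∫ ω, Y ω ∂μ) :=
  tendstoInMeasure_of_tendsto_ae
    (fun _ => (aestronglyMeasurable_fun_sum _ fun z _ =>
      ((hident z).integrable_iff.2 hY).aestronglyMeasurable).const_smul _)
    (strong_law_ae_of_monotone_finset (box_mono d) (lt_card_box hd) hY
      (fun _ _ hij => hindep.indepFun hij) hident)

lemma norm_inv_smul_sub_le {E : Type*} [NormedAddCommGroup E] [NormedSpace ℝ E]
    (a b s c : E) {q v : ℝ} (hq : 0 < q) (hqv : q ≤ v) :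
    ‖v⁻¹ • a - c‖ ≤ ‖a - b‖ / v + ‖b - s‖ / q + ‖q⁻¹ • s - c‖ + |1 - q / v| * ‖c‖ := by
  have hv : 0 < v := hq.trans_le hqv
  have hdecomp : v⁻¹ • a - c =
      v⁻¹ • (a - b) + v⁻¹ • (b - s) + (q / v) • (q⁻¹ • s - c) - (1 - q / v) • c := by
    have hqq : q / v * q⁻¹ = v⁻¹ := by field_simp
    rw [smul_sub (q / v), smul_smul, hqq]
    module
  have hratio : 0 ≤ q / v ∧ q / v ≤ 1 := ⟨by positivity, div_le_one_of_le₀ hqv hv.le⟩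
  calc ‖v⁻¹ • a - c‖
      ≤ ‖v⁻¹ • (a - b)‖ + ‖v⁻¹ • (b - s)‖ + ‖(q / v) • (q⁻¹ • s - c)‖ + ‖(1 - q / v) • c‖ := by
        rw [hdecomp]
        exact (norm_sub_le _ _).trans (by gcongr; exact norm_add₃_le)
    _ ≤ ‖a - b‖ / v + ‖b - s‖ / q + ‖q⁻¹ • s - c‖ + |1 - q / v| * ‖c‖ := by
        simp only [norm_smul, Real.norm_eq_abs, abs_inv, abs_of_pos hv, abs_of_nonneg hratio.1,
          inv_mul_eq_div]
        gcongr
        exact mul_le_of_le_one_left (norm_nonneg _) hratio.2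

lemma dist_inv_smul_lt {E : Type*} [NormedAddCommGroup E] [NormedSpace ℝ E]
    (a b s μ : E) {N p v ε : ℝ} (hN : 0 < N) (hp : 0 < p) (hv : N * p ≤ v)
    (hab : ‖a - b‖ ≤ ε / 4 * v) (hbs : ‖b - s‖ ≤ ε / 4 * (N * p))
    (hs : ‖N⁻¹ • s - μ‖ < ε / 4 * p) (hratio : |1 - N * p / v| * ‖p⁻¹ • μ‖ < ε / 4) :
    dist (v⁻¹ • a) (p⁻¹ • μ) < ε := by
  have hq : 0 < N * p := mul_pos hN hp
  have hε : 0 ≤ ε / 4 := (by positivity : 0 ≤ |1 - N * p / v| * ‖p⁻¹ • μ‖).trans hratio.le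
  have hs' : ‖(N * p)⁻¹ • s - p⁻¹ • μ‖ < ε / 4 := by
    rw [mul_inv, mul_comm, ← smul_smul, ← smul_sub, norm_smul, norm_inv,
      Real.norm_of_nonneg hp.le, inv_mul_lt_iff₀ hp]
    linarith
  have hab' := div_le_of_le_mul₀ (hq.le.trans hv) hε hab
  have hbs' := div_le_of_le_mul₀ hq.le hε hbs
  rw [dist_eq_norm]
  linarith [norm_inv_smul_sub_le a b s (p⁻¹ • μ) hq hv]

lemma measure_le_of_subset_union₃ {μ : Measure Ω} {s t₁ t₂ t₃ : Set Ω} {δ : ℝ≥0∞}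
    (hs : s ⊆ t₁ ∪ t₂ ∪ t₃) (h₁ : μ t₁ ≤ δ / 3) (h₂ : μ t₂ ≤ δ / 3) (h₃ : μ t₃ ≤ δ / 3) :
    μ s ≤ δ :=
  calc μ s ≤ μ (t₁ ∪ t₂ ∪ t₃) := measure_mono hs
    _ ≤ μ t₁ + μ t₂ + μ t₃ := (measure_union_le _ _).trans (by gcongr; exact measure_union_le _ _)
    _ ≤ δ / 3 + δ / 3 + δ / 3 := by gcongr
    _ = δ := ENNReal.add_thirds δ

/-- The index `m_n` of weak regularity. -/
def blockIndex (k n : ℕ) : ℕ := (n / k - 1) / 2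

lemma blockIndex_spec {k n : ℕ} (hk : 0 < k) (hn : 3 * k ≤ n) :
    1 ≤ blockIndex k n ∧ (2 * blockIndex k n + 1) * k ≤ n ∧ n < (2 * blockIndex k n + 3) * k := by
  have hq : 3 ≤ n / k := (Nat.le_div_iff_mul_le hk).2 (by linarith)
  have hlow : (n / k) * k ≤ n := Nat.div_mul_le_self n k
  have hhigh : n < (n / k + 1) * k := by rw [add_one_mul]; exact Nat.lt_div_mul_add hk
  unfold blockIndex
  refine ⟨by omega, le_trans (Nat.mul_le_mul_right k (by omega)) hlow,
    hhigh.trans_le (Nat.mul_le_mul_right k (by omega))⟩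

lemma tendsto_blockIndex {k : ℕ} (hk : 0 < k) : Tendsto (blockIndex k) atTop atTop :=
  tendsto_atTop_atTop.2 fun b => ⟨(2 * b + 1) * k, fun n hn => by
    have : 2 * b + 1 ≤ n / k := (Nat.le_div_iff_mul_le hk).2 hn
    unfold blockIndex; omega⟩

lemma tendsto_vol_block_div_vol {d k : ℕ} (hk : 0 < k) :
    Tendsto (fun n => vol d ((2 * blockIndex k n + 1) * k) / vol d n) atTop (nhds 1) := by
  refine tendsto_vol_div_vol (C := 2 * k) ?_
  filter_upwards [eventually_ge_atTop (3 * k)] with n hn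
  obtain ⟨-, hlow, hhigh⟩ := blockIndex_spec hk hn
  have hlow' : (((2 * blockIndex k n + 1) * k : ℕ) : ℝ) ≤ n := by exact_mod_cast hlow
  have hhigh' : (n : ℝ) < ((2 * blockIndex k n + 1) * k : ℕ) + 2 * k := by
    exact_mod_cast (show n < (2 * blockIndex k n + 1) * k + 2 * k by linarith)
  rw [abs_le]
  constructor <;> linarith

lemma exists_eventually_measure_dist_le {d h : ℕ} (hd : 1 ≤ d) {P : Measure Ω}
    [IsProbabilityMeasure P] {S : ℕ → Ω → EuclideanSpace ℝ (Fin h)}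
    (hint : ∀ n, Integrable (S n) P) (hreg : WeakRegular d h P S) {r : ℕ}
    {T : ℕ → (Fin d → ℤ) → Ω → EuclideanSpace ℝ (Fin h)} (hW : WeakNAWitness d h P S r T)
    {ε : ℝ} (hε : 0 < ε) {δ : ℝ≥0∞} (hδ : 0 < δ) :
    ∃ K, ∀ k ≥ K, ∀ᶠ n in atTop, P {ω | ε ≤
      dist ((vol d n)⁻¹ • S n ω) ((vol d k)⁻¹ • ∫ ω, S (k - r) ω ∂P)} ≤ δ := by
  obtain ⟨hindep, hident, hadd⟩ := hW
  have hε₁ : 0 < ε / 4 := by positivity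
  have hδ₁ : 0 < δ / 3 := ENNReal.div_pos hδ.ne' ENNReal.ofNat_ne_top
  obtain ⟨K, hK⟩ := eventually_atTop.1 (ENNReal.tendsto_nhds_zero.1 (hadd _ hε₁) _ hδ₁)
  refine ⟨K + r + 1, fun k hk => ?_⟩
  have hk0 : 0 < k := by omega
  have hj : 1 ≤ k - r := by omega
  set mean := ∫ ω, S (k - r) ω ∂P
  set c := (vol d k)⁻¹ • mean
  set M := fun n => (2 * blockIndex k n + 1) * k
  have hlln : ∀ᶠ n in atTop, P {ω | ε / 4 * vol d k ≤
      ‖(#(box d (blockIndex k n)) : ℝ)⁻¹ • ∑ z ∈ box d (blockIndex k n), T (k - r) z ω - mean‖}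
      ≤ δ / 3 := by
    have hbox := tendstoInMeasure_box_average hd (hint (k - r)) (hindep _ hj) (hident _ hj)
    have hprob := tendstoInMeasure_iff_norm.1 hbox _ (mul_pos hε₁ (vol_pos (d := d) hk0))
    exact ENNReal.tendsto_nhds_zero.1 (hprob.comp (tendsto_blockIndex hk0)) _ hδ₁
  have hratio : ∀ᶠ n in atTop, |1 - vol d (M n) / vol d n| * ‖c‖ < ε / 4 := by
    have : Tendsto (fun n => |1 - vol d (M n) / vol d n| * ‖c‖) atTop (nhds 0) := by
      simpa using (((tendsto_vol_block_div_vol hk0).const_sub 1).abs.mul_const ‖c‖)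
    exact this.eventually (gt_mem_nhds hε₁)
  filter_upwards [ENNReal.tendsto_nhds_zero.1 (hreg k hk0 _ hε₁) _ hδ₁, hlln, hratio,
    eventually_ge_atTop (3 * k)] with n hreg_n hlln_n hratio_n hn
  refine measure_le_of_subset_union₃ (fun ω hω => ?_) hreg_n (hK k (by omega)) hlln_n
  by_contra hbad
  simp only [Set.mem_union, Set.mem_ofPred_eq, not_or, not_exists, not_and, not_lt, not_le]
    at hbad hω
  obtain ⟨⟨hA, hB⟩, hL⟩ := hbad
  obtain ⟨hm, hlow, hhigh⟩ := blockIndex_spec hk0 hn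
  have hvol : vol d (M n) = (#(box d (blockIndex k n)) : ℝ) * vol d k := by
    rw [vol_mul, card_box]; push_cast; rfl
  refine hω.not_gt (dist_inv_smul_lt _ _ _ _ (Nat.cast_pos.2 (by rw [card_box]; positivity))
    (vol_pos hk0) ?_ (hA _ hlow hhigh) ?_ hL (hvol ▸ hratio_n))
  · exact hvol ▸ vol_mono d hlow
  · exact hvol ▸ hB _ hm

theorem exists_tendsto_tendstoInMeasure_of_forall_eventually_measure_le {E : Type*}
    [MetricSpace E] [CompleteSpace E] {μ : Measure Ω} [IsProbabilityMeasure μ]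
    {X : ℕ → Ω → E} {c : ℕ → E}
    (h : ∀ ε > 0, ∀ δ > (0 : ℝ≥0∞), ∃ K, ∀ k ≥ K, ∀ᶠ n in atTop,
      μ {ω | ε ≤ dist (X n ω) (c k)} ≤ δ) :
    ∃ x, Tendsto c atTop (nhds x) ∧ TendstoInMeasure μ X atTop (fun _ => x) := by
  have hcauchy : CauchySeq c := by
    refine Metric.cauchySeq_iff.2 fun ε hε => ?_
    obtain ⟨K, hK⟩ := h (ε / 2) (by positivity) (1 / 3) (by norm_num)
    refine ⟨K, fun a ha b hb => ?_⟩
    obtain ⟨n, hna, hnb⟩ := ((hK a ha).and (hK b hb)).exists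
    set A := {ω | ε / 2 ≤ dist (X n ω) (c a)} ∪ {ω | ε / 2 ≤ dist (X n ω) (c b)}
    have hA : μ A < μ Set.univ := by
      rw [measure_univ]
      refine ((measure_union_le _ _).trans (add_le_add hna hnb)).trans_lt ?_
      rw [ENNReal.div_add_div_same, ENNReal.div_lt_iff (by norm_num) (by norm_num)]
      norm_num
    obtain ⟨ω, hω⟩ := (Set.ne_univ_iff_exists_notMem A).1 fun hA_univ => hA.ne (by rw [hA_univ])
    simp only [A, Set.mem_union, Set.mem_ofPred_eq, not_or, not_le] at hω
    calc dist (c a) (c b) ≤ dist (X n ω) (c a) + dist (X n ω) (c b) := dist_triangle_left _ _ _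
      _ < ε := by linarith
  obtain ⟨x, hx⟩ := cauchySeq_tendsto_of_complete hcauchy
  refine ⟨x, hx, tendstoInMeasure_iff_dist.2 fun ε hε => ENNReal.tendsto_nhds_zero.2 fun δ hδ => ?_⟩
  obtain ⟨K, hK⟩ := h (ε / 2) (by positivity) δ hδ
  obtain ⟨k, hkK, hk⟩ := ((eventually_ge_atTop K).and
    (hx.eventually (Metric.ball_mem_nhds x (half_pos hε)))).exists
  filter_upwards [hK k hkK] with n hn
  refine le_trans (measure_mono fun ω hω => ?_) hn
  simp only [Set.mem_ofPred_eq] at hω hk ⊢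
  linarith [dist_triangle (X n ω) (c k) x]

theorem wlln_of_weakRegular_weakNearlyAdditive_general
    (d h : ℕ) (hd : 1 ≤ d)
    (P : Measure Ω) [IsProbabilityMeasure P]
    (S : ℕ → Ω → EuclideanSpace ℝ (Fin h))
    (hint : ∀ n, Integrable (S n) P)
    (hreg : WeakRegular d h P S) (hadd : WeakNearlyAdditive d h P S) :
    ∃ Shat : EuclideanSpace ℝ (Fin h),
      Tendsto (fun n => (vol d n)⁻¹ • ∫ ω, S n ω ∂P) atTop (nhds Shat) ∧
      TendstoInMeasure P (fun n ω => (vol d n)⁻¹ • S n ω) atTop (fun _ => Shat) := by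
  obtain ⟨r, T, hW⟩ := hadd
  obtain ⟨Shat, hc, hS⟩ := exists_tendsto_tendstoInMeasure_of_forall_eventually_measure_le
    (c := fun k => (vol d k)⁻¹ • ∫ ω, S (k - r) ω ∂P)
    fun ε hε δ hδ => exists_eventually_measure_dist_le hd hint hreg hW hε hδ
  refine ⟨Shat, ?_, hS⟩
  have hshift : Tendsto (fun n => vol d (n + r) / vol d n) atTop (nhds 1) :=
    tendsto_vol_div_vol (C := r) (.of_forall fun n => by simp)
  have hlim := hshift.smul (hc.comp (tendsto_add_atTop_nat r))
  rw [one_smul] at hlim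
  refine hlim.congr' ?_
  filter_upwards [eventually_gt_atTop 0] with n hn
  have hscalar : vol d (n + r) / vol d n * (vol d (n + r))⁻¹ = (vol d n)⁻¹ := by
    have := vol_pos (d := d) (hn.trans_le (n.le_add_right r))
    field_simp
  simp only [Function.comp_apply, Nat.add_sub_cancel, smul_smul, hscalar]

theorem wlln_of_weakRegular_weakNearlyAdditive
    (d h : ℕ) (hd : 1 ≤ d) (hh : 1 ≤ h)
    (P : Measure Ω) [IsProbabilityMeasure P]
    (S : ℕ → Ω → EuclideanSpace ℝ (Fin h)) (hmeas : ∀ n, Measurable (S n))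
    (hint : ∀ n, Integrable (S n) P)
    (hreg : WeakRegular d h P S) (hadd : WeakNearlyAdditive d h P S)
    (hbound : ∃ C : ℝ, ∀ n, 1 ≤ n → ‖∫ ω, S n ω ∂P‖ ≤ C * vol d n) :
    ∃ Shat : EuclideanSpace ℝ (Fin h),
      Tendsto (fun n => (vol d n)⁻¹ • ∫ ω, S n ω ∂P) atTop (nhds Shat) ∧
      TendstoInMeasure P (fun n ω => (vol d n)⁻¹ • S n ω) atTop (fun _ => Shat) :=
  wlln_of_weakRegular_weakNearlyAdditive_general d h hd P S hint hreg hadd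

end RandomCubical
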